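/- Let n ≥ 1, let Σ = σ²·I + τ²·𝟙𝟙ᵀ be an exchangeable n×n real covariance matrix (𝟙 the all-ones vector), let Ω = ω²·I, and let B be an n×n real matrix satisfying the discrete Lyapunov equation Σ = B·Σ·Bᵀ + Ω. Then for every n×n permutation matrix P, the conjugated matrix B' = P·B·Pᵀ also satisfies Σ = B'·Σ·B'ᵀ + Ω. Hence the Lyapunov equation does not distinguish B from any of its permutation conjugates. -/

import Mathlib

/-!
A permutation matrix `P` is orthogonal and commutes with `I` and with `𝟙𝟙ᵀ`, hence with `S` and `Ω`.
So `(P B Pᵀ) S (P B Pᵀ)ᵀ = P (B (Pᵀ S P) Bᵀ) Pᵀ = P (B S Bᵀ) Pᵀ = P (S - Ω) Pᵀ = S - Ω`.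
-/

open Matrix

variable {ι R : Type*} [Fintype ι] [DecidableEq ι]

theorem lyapunov_conj_of_commute [CommRing R] {U B S Ω : Matrix ι ι R} (hU : U * Uᵀ = 1)
    (hUS : Commute U S) (hUΩ : Commute U Ω) (hB : S = B * S * Bᵀ + Ω) :
    S = U * B * Uᵀ * S * (U * B * Uᵀ)ᵀ + Ω := by
  have hUtU : Uᵀ * U = 1 := mul_eq_one_comm.mp hU
  have hBSB : B * S * Bᵀ = S - Ω := eq_sub_of_add_eq hB.symm
  have hUtSU : Uᵀ * S * U = S := by
    rw [Matrix.mul_assoc, ← hUS.eq, ← Matrix.mul_assoc, hUtU, Matrix.one_mul]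
  have hconj : U * (S - Ω) * Uᵀ = S - Ω := by
    rw [Matrix.mul_sub, hUS.eq, hUΩ.eq, Matrix.sub_mul, Matrix.mul_assoc S, Matrix.mul_assoc Ω,
      hU, Matrix.mul_one, Matrix.mul_one]
  symm
  calc U * B * Uᵀ * S * (U * B * Uᵀ)ᵀ + Ω = U * (B * (Uᵀ * S * U) * Bᵀ) * Uᵀ + Ω := by
        simp only [transpose_mul, transpose_transpose, Matrix.mul_assoc]
    _ = S := by rw [hUtSU, hBSB, hconj, sub_add_cancel]

theorem permMatrix_mul_transpose_permMatrix [NonAssocSemiring R] (σ : Equiv.Perm ι) :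
    σ.permMatrix R * (σ.permMatrix R)ᵀ = 1 := by
  rw [transpose_permMatrix, ← permMatrix_mul, inv_mul_cancel, permMatrix_one]

theorem commute_permMatrix_const [NonAssocSemiring R] (σ : Equiv.Perm ι) (c : R) :
    Commute (σ.permMatrix R) (of fun _ _ : ι => c) := by
  rw [Commute, SemiconjBy, PEquiv.toMatrix_toPEquiv_mul, PEquiv.mul_toMatrix_toPEquiv]
  rfl

theorem lyapunov_permutation_non_identification_general
    (n : ℕ) (σ2 τ2 ω2 : ℝ)
    (B : Matrix (Fin n) (Fin n) ℝ)
    (S : Matrix (Fin n) (Fin n) ℝ)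
    (hS : S = σ2 • (1 : Matrix (Fin n) (Fin n) ℝ) +
        τ2 • (Matrix.of fun _ _ : Fin n => (1 : ℝ)))
    (Ω : Matrix (Fin n) (Fin n) ℝ)
    (hΩ : Ω = ω2 • (1 : Matrix (Fin n) (Fin n) ℝ))
    (hB : S = B * S * Bᵀ + Ω) :
    ∀ e : Equiv.Perm (Fin n),
      S = ((e.permMatrix ℝ) * B * (e.permMatrix ℝ)ᵀ) * S *
            ((e.permMatrix ℝ) * B * (e.permMatrix ℝ)ᵀ)ᵀ + Ω := by
  intro e
  have hPS : Commute (e.permMatrix ℝ) S := hS ▸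
    ((Commute.one_right _).smul_right σ2).add_right ((commute_permMatrix_const e 1).smul_right τ2)
  have hPΩ : Commute (e.permMatrix ℝ) Ω := hΩ ▸ (Commute.one_right _).smul_right ω2
  exact lyapunov_conj_of_commute (permMatrix_mul_transpose_permMatrix e) hPS hPΩ hB

/-- With exchangeable stationary covariance `S = σ²•I + τ²•𝟙𝟙ᵀ` and shock
covariance `Ω = ω²•I`, if `B` solves the discrete Lyapunov equation
`S = B S Bᵀ + Ω`, then so does every permutation conjugate `P B Pᵀ`. -/
theorem lyapunov_permutation_non_identification
    (n : ℕ) (hn : 1 ≤ n) (σ2 τ2 ω2 : ℝ)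
    (B : Matrix (Fin n) (Fin n) ℝ)
    (S : Matrix (Fin n) (Fin n) ℝ)
    (hS : S = σ2 • (1 : Matrix (Fin n) (Fin n) ℝ) +
        τ2 • (Matrix.of fun _ _ : Fin n => (1 : ℝ)))
    (Ω : Matrix (Fin n) (Fin n) ℝ)
    (hΩ : Ω = ω2 • (1 : Matrix (Fin n) (Fin n) ℝ))
    (hB : S = B * S * Bᵀ + Ω) :
    ∀ e : Equiv.Perm (Fin n),
      S = ((e.permMatrix ℝ) * B * (e.permMatrix ℝ)ᵀ) * S *
            ((e.permMatrix ℝ) * B * (e.permMatrix ℝ)ᵀ)ᵀ + Ω :=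
  lyapunov_permutation_non_identification_general n σ2 τ2 ω2 B S hS Ω hΩ hB
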